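/- Let θ : ℝⁿ → ℝ be a continuously differentiable function that is strongly convex with modulus ρ > 0, let H : ℝⁿ → ℝᵐ have convex continuously differentiable components, let φ : ℝⁿ → ℝ be convex, and let S := {x : H(x) ≤ 0} be nonempty. Let x̄ be the unique minimizer of θ + φ over S, and suppose there exist λ̄ ∈ ℝᵐ with λ̄ ≥ 0, ⟨λ̄, H(x̄)⟩ = 0, and v̄ ∈ ∂φ(x̄) such that ∇θ(x̄) + v̄ + ∇H(x̄)λ̄ = 0. Then for any x ∈ ℝⁿ, λ ∈ ℝᵐ with λ ≥ 0, and v ∈ ∂φ(x): ρ‖x − x̄‖² ≤ ‖x − x̄‖·‖∇θ(x) + v + ∇H(x)λ‖ + ‖λ̄‖₁·‖[H(x)]₊‖_∞ − ⟨λ, H(x)⟩. -/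

import Mathlib

/-!
Strong monotonicity of `∇θ` bounds `ρ‖x - x̄‖²` by `⟪x - x̄, ∇θ(x) - ∇θ(x̄)⟫`. Eliminating `∇θ(x̄)`
through the KKT condition splits this into four terms: `⟪x - x̄, ∇θ(x) + v + ∇H(x)λ⟫`, bounded by
Cauchy–Schwarz; `-⟪x - x̄, v - v̄⟫ ≤ 0`, by monotonicity of `∂φ`; `-⟪x - x̄, ∇H(x)λ⟫ ≤ -⟨λ, H(x)⟩`,
by the gradient inequality for the convex `Hᵢ` at `x` and feasibility of `x̄`; and
`⟪x - x̄, ∇H(x̄)λ̄⟫ ≤ ⟨λ̄, H(x)⟩ ≤ ‖λ̄‖₁‖[H(x)]₊‖_∞`, by the gradient inequality at `x̄` and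
complementarity.
-/

open RealInnerProductSpace

section

variable {E : Type*} [NormedAddCommGroup E] [InnerProductSpace ℝ E]

theorem ConvexOn.inner_gradient_le_sub [CompleteSpace E] {f : E → ℝ} {g x : E}
    (hf : ConvexOn ℝ Set.univ f) (hg : HasGradientAt f g x) (y : E) : ⟪g, y - x⟫ ≤ f y - f x := by
  have hline : ConvexOn ℝ Set.univ (f ∘ AffineMap.lineMap (k := ℝ) x y) := by
    simpa using hf.comp_affineMap (AffineMap.lineMap (k := ℝ) x y)
  have hderiv : HasDerivAt (f ∘ AffineMap.lineMap (k := ℝ) x y) ⟪g, y - x⟫ 0 := by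
    have hg' : HasFDerivAt f (InnerProductSpace.toDual ℝ E g)
        (AffineMap.lineMap (k := ℝ) x y (0 : ℝ)) := by
      simpa using hg.hasFDerivAt
    simpa using hg'.comp_hasDerivAt (0 : ℝ) AffineMap.hasDerivAt_lineMap
  simpa [slope_def_field] using
    hline.le_slope_of_hasDerivAt (Set.mem_univ 0) (Set.mem_univ 1) one_pos hderiv

theorem inner_sub_sum_smul_gradient_le [CompleteSpace E] {ι : Type*} [Fintype ι]
    {H : ι → E → ℝ} {g : ι → E} {x : E} (hH : ∀ i, ConvexOn ℝ Set.univ (H i))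
    (hg : ∀ i, HasGradientAt (H i) (g i) x)
    {lam : ι → ℝ} (hlam : ∀ i, 0 ≤ lam i) (y : E) :
    ⟪y - x, ∑ i, lam i • g i⟫ ≤ ∑ i, lam i * H i y - ∑ i, lam i * H i x := by
  rw [inner_sum, ← Finset.sum_sub_distrib]
  refine Finset.sum_le_sum fun i _ => ?_
  rw [real_inner_smul_right, real_inner_comm, ← mul_sub]
  exact mul_le_mul_of_nonneg_left ((hH i).inner_gradient_le_sub (hg i) y) (hlam i)

theorem inner_sub_subgradient_nonneg {f : E → ℝ} {x y u w : E}
    (hu : ∀ z, f z ≥ f x + ⟪u, z - x⟫) (hw : ∀ z, f z ≥ f y + ⟪w, z - y⟫) :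
    0 ≤ ⟪x - y, u - w⟫ := by
  have hux := hu y
  have hwy := hw x
  rw [← neg_sub x y, inner_neg_right, real_inner_comm] at hux
  rw [inner_sub_right, real_inner_comm w]
  linarith

end

theorem sum_mul_le_sum_abs_mul_norm_posPart {ι : Type*} [Fintype ι] {a : ι → ℝ}
    (ha : ∀ i, 0 ≤ a i) (b : ι → ℝ) :
    ∑ i, a i * b i ≤ (∑ i, |a i|) * ‖fun i => max (b i) 0‖ := by
  rw [Finset.sum_mul]
  refine Finset.sum_le_sum fun i _ => ?_
  have hb : max (b i) 0 ≤ ‖fun i => max (b i) 0‖ := by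
    simpa [abs_of_nonneg (le_max_right (b i) 0)] using norm_le_pi_norm (fun i => max (b i) 0) i
  rw [abs_of_nonneg (ha i)]
  exact mul_le_mul_of_nonneg_left ((le_max_left _ _).trans hb) (ha i)

theorem stmt_2_general {n m : ℕ}
    (φ : EuclideanSpace ℝ (Fin n) → ℝ)
    (θ' : EuclideanSpace ℝ (Fin n) → EuclideanSpace ℝ (Fin n))
    (H : Fin m → EuclideanSpace ℝ (Fin n) → ℝ)
    (H' : Fin m → EuclideanSpace ℝ (Fin n) → EuclideanSpace ℝ (Fin n))
    (ρ : ℝ)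
    (hθsc : ∀ x y, ⟪x - y, θ' x - θ' y⟫ ≥ ρ * ‖x - y‖ ^ 2)
    (hHdiff : ∀ i x, HasGradientAt (H i) (H' i x) x)
    (hHconv : ∀ i, ConvexOn ℝ Set.univ (H i))
    (S : Set (EuclideanSpace ℝ (Fin n))) (hS : S = {x | ∀ i, H i x ≤ 0})
    (xb : EuclideanSpace ℝ (Fin n)) (hxbS : xb ∈ S)
    (lb : Fin m → ℝ) (hlb : ∀ i, 0 ≤ lb i) (hcomp : ∑ i, lb i * H i xb = 0)
    (vb : EuclideanSpace ℝ (Fin n)) (hvb : ∀ z, φ z ≥ φ xb + ⟪vb, z - xb⟫)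
    (hKKT : θ' xb + vb + ∑ i, lb i • H' i xb = 0)
    (x : EuclideanSpace ℝ (Fin n)) (lam : Fin m → ℝ) (hlam : ∀ i, 0 ≤ lam i)
    (v : EuclideanSpace ℝ (Fin n)) (hv : ∀ z, φ z ≥ φ x + ⟪v, z - x⟫) :
    ρ * ‖x - xb‖ ^ 2 ≤
      ‖x - xb‖ * ‖θ' x + v + ∑ i, lam i • H' i x‖
        + (∑ i, |lb i|) * ‖(fun i => max (H i x) 0 : Fin m → ℝ)‖
        - ∑ i, lam i * H i x := by
  set G := θ' x + v + ∑ i, lam i • H' i x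
  have hxb : ∀ i, H i xb ≤ 0 := by
    subst hS
    exact hxbS
  have hθ' : θ' x - θ' xb
      = G - (v - vb) - ∑ i, lam i • H' i x + ∑ i, lb i • H' i xb := by
    simp only [G]
    linear_combination (norm := module) -hKKT
  have hsubgrad := inner_sub_subgradient_nonneg hv hvb
  have hlam_side := inner_sub_sum_smul_gradient_le hHconv (fun i => hHdiff i x) hlam xb
  rw [← neg_sub x xb, inner_neg_left] at hlam_side
  have hfeasible : ∑ i, lam i * H i xb ≤ 0 :=
    Finset.sum_nonpos fun i _ => mul_nonpos_of_nonneg_of_nonpos (hlam i) (hxb i)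
  have hlb_side := inner_sub_sum_smul_gradient_le hHconv (fun i => hHdiff i xb) hlb x
  rw [hcomp, sub_zero] at hlb_side
  have hviolation := sum_mul_le_sum_abs_mul_norm_posPart hlb (fun i => H i x)
  calc ρ * ‖x - xb‖ ^ 2 ≤ ⟪x - xb, θ' x - θ' xb⟫ := hθsc x xb
    _ = ⟪x - xb, G⟫ - ⟪x - xb, v - vb⟫ - ⟪x - xb, ∑ i, lam i • H' i x⟫
          + ⟪x - xb, ∑ i, lb i • H' i xb⟫ := by
      rw [hθ', inner_add_right, inner_sub_right, inner_sub_right]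
    _ ≤ _ := by linarith [real_inner_le_norm (x - xb) G]

/-- Global error bound for a strongly convex program (Proposition 2.1): under a KKT
condition at the unique minimizer `xb` of `θ + φ` over `S = {x | H x ≤ 0}`, for every
`x`, `λ ≥ 0` and subgradient `v` of `φ` at `x`,
`ρ‖x − xb‖² ≤ ‖x − xb‖·‖∇θ(x) + v + ∇H(x)λ‖ + ‖λb‖₁·‖[H x]₊‖_∞ − ⟨λ, H x⟩`. -/
theorem stmt_2 {n m : ℕ}
    (θ φ : EuclideanSpace ℝ (Fin n) → ℝ)
    (θ' : EuclideanSpace ℝ (Fin n) → EuclideanSpace ℝ (Fin n))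
    (H : Fin m → EuclideanSpace ℝ (Fin n) → ℝ)
    (H' : Fin m → EuclideanSpace ℝ (Fin n) → EuclideanSpace ℝ (Fin n))
    (ρ : ℝ) (hρ : 0 < ρ)
    (hθdiff : ∀ x, HasGradientAt θ (θ' x) x)
    (hθsc : ∀ x y, ⟪x - y, θ' x - θ' y⟫ ≥ ρ * ‖x - y‖ ^ 2)
    (hHdiff : ∀ i x, HasGradientAt (H i) (H' i x) x)
    (hHconv : ∀ i, ConvexOn ℝ Set.univ (H i))
    (hφconv : ConvexOn ℝ Set.univ φ)
    (S : Set (EuclideanSpace ℝ (Fin n))) (hS : S = {x | ∀ i, H i x ≤ 0})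
    (hSne : S.Nonempty)
    (xb : EuclideanSpace ℝ (Fin n)) (hxbS : xb ∈ S)
    (hmin : ∀ x ∈ S, θ xb + φ xb ≤ θ x + φ x)
    (huniq : ∀ z ∈ S, θ z + φ z = θ xb + φ xb → z = xb)
    (lb : Fin m → ℝ) (hlb : ∀ i, 0 ≤ lb i) (hcomp : ∑ i, lb i * H i xb = 0)
    (vb : EuclideanSpace ℝ (Fin n)) (hvb : ∀ z, φ z ≥ φ xb + ⟪vb, z - xb⟫)
    (hKKT : θ' xb + vb + ∑ i, lb i • H' i xb = 0)
    (x : EuclideanSpace ℝ (Fin n)) (lam : Fin m → ℝ) (hlam : ∀ i, 0 ≤ lam i)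
    (v : EuclideanSpace ℝ (Fin n)) (hv : ∀ z, φ z ≥ φ x + ⟪v, z - x⟫) :
    ρ * ‖x - xb‖ ^ 2 ≤
      ‖x - xb‖ * ‖θ' x + v + ∑ i, lam i • H' i x‖
        + (∑ i, |lb i|) * ‖(fun i => max (H i x) 0 : Fin m → ℝ)‖
        - ∑ i, lam i * H i x :=
  stmt_2_general φ θ' H H' ρ hθsc hHdiff hHconv S hS xb hxbS lb hlb hcomp vb hvb hKKT x lam hlam v
    hv
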